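/- arXiv:math-ph/9809027 — 5 statements merged into one kernel-verified Lean document; each statement's English description precedes it below -/
import Mathlib

section
/- For every q ∈ (0,1), setting Δ = (q + q⁻¹)/2 and B = (1 − q²)/(2(1 + q²)), the two-site kink Hamiltonian h(Δ) = (1/4)·𝟙⊗𝟙 − S³⊗S³ − Δ⁻¹(S¹⊗S¹ + S²⊗S²) + B(S³⊗𝟙 − 𝟙⊗S³), regarded as a 4×4 complex matrix on ℂ²⊗ℂ², is Hermitian and positive semidefinite. -/
open Matrix Kronecker ComplexOrder

noncomputable section

/-- Spin-1/2 matrix `S¹ = (1/2)[[0,1],[1,0]]`. -/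
def S1 : Matrix (Fin 2) (Fin 2) ℂ := !![0, 1/2; 1/2, 0]

/-- Spin-1/2 matrix `S² = (1/2)[[0,−i],[i,0]]`. -/
def S2 : Matrix (Fin 2) (Fin 2) ℂ := !![0, -Complex.I/2; Complex.I/2, 0]

/-- Spin-1/2 matrix `S³ = (1/2)[[1,0],[0,−1]]`. -/
def S3 : Matrix (Fin 2) (Fin 2) ℂ := !![1/2, 0; 0, -1/2]

/-- The anisotropy `Δ = (q + q⁻¹)/2`. -/
def Delta (q : ℝ) : ℝ := (q + q⁻¹) / 2

/-- The boundary field `B = (1 − q²)/(2(1 + q²)) = (1/2)√(1 − 1/Δ²)`. -/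
def Bfield (q : ℝ) : ℝ := (1 - q ^ 2) / (2 * (1 + q ^ 2))

/-- The two-site kink Hamiltonian
`h(Δ) = (1/4)·𝟙⊗𝟙 − S³⊗S³ − Δ⁻¹(S¹⊗S¹ + S²⊗S²) + B(S³⊗𝟙 − 𝟙⊗S³)` on `ℂ²⊗ℂ²`. -/
def hKink (q : ℝ) : Matrix (Fin 2 × Fin 2) (Fin 2 × Fin 2) ℂ :=
  (1 / 4 : ℂ) • (1 : Matrix (Fin 2 × Fin 2) (Fin 2 × Fin 2) ℂ)
    - S3 ⊗ₖ S3 - ((Delta q : ℂ))⁻¹ • (S1 ⊗ₖ S1 + S2 ⊗ₖ S2)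
    + (Bfield q : ℂ) • (S3 ⊗ₖ (1 : Matrix (Fin 2) (Fin 2) ℂ)
        - (1 : Matrix (Fin 2) (Fin 2) ℂ) ⊗ₖ S3)

/-!
In the basis `↑↑, ↑↓, ↓↑, ↓↓` the Hamiltonian vanishes on `↑↑` and `↓↓`, and on the middle block
it is `[[1/2 + B, -1/(2Δ)], [-1/(2Δ), 1/2 - B]]`. Since `1/2 + B = 1/(1+q²)`, `1/2 - B = q²/(1+q²)`
and `1/(2Δ) = q/(1+q²)`, this block is `(1+q²)⁻¹ w wᴴ` with `w = (1, -q)`: the Hamiltonian is a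
nonnegative multiple of the projection onto the kink vector.
-/

-- Also true at `q = 0`, where both sides are `0` because `0⁻¹ = 0`.
lemma Delta_inv (q : ℝ) : (Delta q)⁻¹ = 2 * q / (1 + q ^ 2) := by
  unfold Delta
  rcases eq_or_ne q 0 with rfl | hq
  · simp
  · field_simp
    ring

def kinkVector (q : ℝ) : Fin 2 × Fin 2 → ℂ := fun p => !![0, 1; -(q : ℂ), 0] p.1 p.2

lemma hKink_eq_smul_vecMulVec_kinkVector (q : ℝ) :
    hKink q = (1 + q ^ 2)⁻¹ • vecMulVec (kinkVector q) (star (kinkVector q)) := by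
  have hnorm : 1 + (q : ℂ) ^ 2 ≠ 0 := by exact_mod_cast (by positivity : 1 + q ^ 2 ≠ 0)
  rw [hKink, ← Complex.ofReal_inv, Delta_inv, Bfield]
  ext ⟨i₁, i₂⟩ ⟨j₁, j₂⟩
  fin_cases i₁ <;> fin_cases i₂ <;> fin_cases j₁ <;> fin_cases j₂ <;>
    simp [kinkVector, S1, S2, S3, one_apply, vecMulVec_apply, div_mul_div_comm,
      Complex.I_mul_I] <;>
    field_simp <;> ring

theorem hKink_isHermitian_and_posSemidef_general (q : ℝ) :
    (hKink q).IsHermitian ∧ (hKink q).PosSemidef := by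
  have h : (hKink q).PosSemidef := by
    rw [hKink_eq_smul_vecMulVec_kinkVector]
    exact (posSemidef_vecMulVec_self_star _).smul (by positivity)
  exact ⟨h.isHermitian, h⟩

/-- For every `q ∈ (0,1)`, with `Δ = (q + q⁻¹)/2` and
`B = (1 − q²)/(2(1 + q²))`, the two-site kink Hamiltonian `h(Δ)`, regarded as a
4×4 complex matrix on `ℂ²⊗ℂ²`, is Hermitian and positive semidefinite. -/
theorem hKink_isHermitian_and_posSemidef (q : ℝ) (hq0 : 0 < q) (hq1 : q < 1) :
    (hKink q).IsHermitian ∧ (hKink q).PosSemidef :=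
  hKink_isHermitian_and_posSemidef_general q
end
end

section
/- For every q ∈ (0,1), with Δ = (q + q⁻¹)/2 and B = (1 − q²)/(2(1 + q²)), and for every w ∈ ℂ, the product vector (|↑⟩ + w|↓⟩) ⊗ (|↑⟩ + qw|↓⟩) lies in the kernel of the two-site kink Hamiltonian h(Δ): h(Δ)((|↑⟩ + w|↓⟩) ⊗ (|↑⟩ + qw|↓⟩)) = 0. -/
/-!
In the basis `↑↑, ↑↓, ↓↑, ↓↓` the Hamiltonian kills `↑↑` and `↓↓`, and on the span of `↑↓, ↓↑`
it is `[[1/2 + B, -1/(2Δ)], [-1/(2Δ), 1/2 - B]] = (1 + q²)⁻¹ [[1, -q], [-q, q²]]`, whose kernel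
is spanned by `q ↑↓ + ↓↑`. The product vector has components `(1, qw, w, qw²)`, so its middle
part lies in that kernel.
-/

open Matrix Kronecker ComplexOrder

noncomputable section

def upv : Fin 2 → ℂ := ![1, 0]

def downv : Fin 2 → ℂ := ![0, 1]

def tens (v w : Fin 2 → ℂ) : Fin 2 × Fin 2 → ℂ := fun p => v p.1 * w p.2

-- At `q = 0` both sides are `0`, because `0⁻¹ = 0`.
lemma two_mul_Delta_inv (q : ℝ) : (2 * Delta q)⁻¹ = q / (1 + q ^ 2) := by
  rcases eq_or_ne q 0 with rfl | hq
  · simp [Delta]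
  · unfold Delta
    field_simp
    ring

lemma half_add_Bfield (q : ℝ) : 1 / 2 + Bfield q = 1 / (1 + q ^ 2) := by
  unfold Bfield
  field_simp
  ring

lemma half_sub_Bfield (q : ℝ) : 1 / 2 - Bfield q = q ^ 2 / (1 + q ^ 2) := by
  unfold Bfield
  field_simp
  ring

section

variable (q : ℝ) (v : Fin 2 × Fin 2 → ℂ)

lemma hKink_mulVec_up_up : (hKink q *ᵥ v) (0, 0) = 0 := by
  simp [hKink, S1, S2, S3, mulVec, dotProduct, Fintype.sum_prod_type, one_apply]
  linear_combination (-(Delta q : ℂ)⁻¹ * v (1, 1) / 4) * Complex.I_sq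

lemma hKink_mulVec_down_down : (hKink q *ᵥ v) (1, 1) = 0 := by
  simp [hKink, S1, S2, S3, mulVec, dotProduct, Fintype.sum_prod_type, one_apply]
  linear_combination (-(Delta q : ℂ)⁻¹ * v (0, 0) / 4) * Complex.I_sq

lemma hKink_mulVec_up_down :
    (hKink q *ᵥ v) (0, 1) =
      ((1 / 2 + Bfield q : ℝ) : ℂ) * v (0, 1) - (((2 * Delta q)⁻¹ : ℝ) : ℂ) * v (1, 0) := by
  simp [hKink, S1, S2, S3, mulVec, dotProduct, Fintype.sum_prod_type, one_apply]
  linear_combination ((Delta q : ℂ)⁻¹ * v (1, 0) / 4) * Complex.I_sq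

lemma hKink_mulVec_down_up :
    (hKink q *ᵥ v) (1, 0) =
      ((1 / 2 - Bfield q : ℝ) : ℂ) * v (1, 0) - (((2 * Delta q)⁻¹ : ℝ) : ℂ) * v (0, 1) := by
  simp [hKink, S1, S2, S3, mulVec, dotProduct, Fintype.sum_prod_type, one_apply]
  linear_combination ((Delta q : ℂ)⁻¹ * v (0, 1) / 4) * Complex.I_sq

lemma hKink_mulVec_eq_zero (hv : v (0, 1) = q * v (1, 0)) : hKink q *ᵥ v = 0 := by
  have hden : (1 + (q : ℂ) ^ 2) ≠ 0 := by exact_mod_cast (by positivity : (1 + q ^ 2 : ℝ) ≠ 0)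
  funext ⟨i, j⟩
  match i, j with
  | 0, 0 => exact hKink_mulVec_up_up q v
  | 0, 1 =>
    rw [Pi.zero_apply, hKink_mulVec_up_down, half_add_Bfield, two_mul_Delta_inv, hv]
    push_cast
    field_simp
    ring
  | 1, 0 =>
    rw [Pi.zero_apply, hKink_mulVec_down_up, half_sub_Bfield, two_mul_Delta_inv, hv]
    push_cast
    field_simp
    ring
  | 1, 1 => exact hKink_mulVec_down_down q v

end

theorem hKink_product_kernel_general (q : ℝ) (w : ℂ) :
    (hKink q).mulVec (tens (upv + w • downv) (upv + ((q : ℂ) * w) • downv)) = 0 :=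
  hKink_mulVec_eq_zero q _ (by simp [tens, upv, downv])

/-- For every `q ∈ (0,1)` and every `w ∈ ℂ`, the product vector
`(|↑⟩ + w|↓⟩) ⊗ (|↑⟩ + qw|↓⟩)` lies in the kernel of the two-site kink
Hamiltonian `h(Δ)`. -/
theorem hKink_product_kernel (q : ℝ) (hq0 : 0 < q) (hq1 : q < 1) (w : ℂ) :
    (hKink q).mulVec (tens (upv + w • downv) (upv + ((q : ℂ) * w) • downv)) = 0 :=
  hKink_product_kernel_general q w
end
end

section
/- Let H be a Hermitian n×n complex matrix with smallest eigenvalue λ_min, and let ψ ∈ ℂⁿ be a unit vector. Then Re⟨ψ, A*[H,A]ψ⟩ ≥ 0 for every n×n complex matrix A if and only if Hψ = λ_min ψ. In other words, the pure solutions of the local stability inequalities are exactly the eigenvectors belonging to the smallest eigenvalue of H. -/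
/-!
Write `λ = λ_min` and `M = H - λ`, which is positive semidefinite. Since
`⟨ψ, A*[H,A]ψ⟩ = ⟨Aψ, H Aψ⟩ - ⟨Aψ, A Hψ⟩`, an eigenvector `Hψ = λψ` turns the form into
`⟨Aψ, M Aψ⟩ ≥ 0`. Conversely, the rank-one choice `A = v ψ*` with `v` a unit ground
eigenvector gives `Aψ = v`, and the form becomes `-⟨ψ, Mψ⟩`; stability then forces
`⟨ψ, Mψ⟩ = 0`, hence `Mψ = 0` because `M ≥ 0`.
-/

open Matrix ComplexOrder

noncomputable section

/-- The standard inner product `⟨v,w⟩ = Σ_i conj(v i) · w i` on `ℂⁿ`,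
conjugate-linear in the first argument. -/
def dotc {ι : Type*} [Fintype ι] (v w : ι → ℂ) : ℂ :=
  ∑ i, (starRingEnd ℂ) (v i) * w i

open scoped MatrixOrder

variable {ι : Type*} [Fintype ι]

lemma dotc_eq_star_dotProduct (v w : ι → ℂ) : dotc v w = star v ⬝ᵥ w := rfl

lemma dotc_sub_right (v w w' : ι → ℂ) : dotc v (w - w') = dotc v w - dotc v w' :=
  dotProduct_sub _ _ _

lemma dotc_smul_right (v w : ι → ℂ) (c : ℂ) : dotc v (c • w) = c * dotc v w :=
  dotProduct_smul _ _ _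

lemma dotc_conjTranspose_mul_mulVec (A B : Matrix ι ι ℂ) (ψ : ι → ℂ) :
    dotc ψ ((Aᴴ * B) *ᵥ ψ) = dotc (A *ᵥ ψ) (B *ᵥ ψ) := by
  rw [dotc_eq_star_dotProduct, ← mulVec_mulVec, dotProduct_mulVec, ← star_mulVec]
  rfl

namespace Matrix.PosSemidef

variable {M : Matrix ι ι ℂ}

lemma re_dotc_mulVec_nonneg (hM : M.PosSemidef) (x : ι → ℂ) : 0 ≤ (dotc x (M *ᵥ x)).re :=
  (Complex.nonneg_iff.mp (hM.dotProduct_mulVec_nonneg x)).1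

lemma mulVec_eq_zero_of_re_dotc_nonpos (hM : M.PosSemidef) {x : ι → ℂ}
    (hx : (dotc x (M *ᵥ x)).re ≤ 0) : M *ᵥ x = 0 := by
  obtain ⟨hre, him⟩ := Complex.nonneg_iff.mp (hM.dotProduct_mulVec_nonneg x)
  refine (hM.dotProduct_mulVec_zero_iff x).mp (Complex.ext ?_ him.symm)
  exact le_antisymm hx hre

end Matrix.PosSemidef

namespace Matrix.IsHermitian

variable [DecidableEq ι] {H : Matrix ι ι ℂ}

lemma posSemidef_sub_smul_one_of_le_eigenvalues (hH : H.IsHermitian) {c : ℝ}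
    (hc : ∀ i, c ≤ hH.eigenvalues i) : (H - (c : ℂ) • 1).PosSemidef := by
  have hle : algebraMap ℝ (Matrix ι ι ℂ) c ≤ H := by
    rw [algebraMap_le_iff_le_spectrum (ha := hH.isSelfAdjoint),
      hH.spectrum_real_eq_range_eigenvalues]
    rintro _ ⟨i, rfl⟩
    exact hc i
  rwa [Matrix.le_iff, Algebra.algebraMap_eq_smul_one, ← Complex.coe_smul] at hle

lemma dotc_eigenvectorBasis_self (hH : H.IsHermitian) (i : ι) :
    dotc (hH.eigenvectorBasis i) (hH.eigenvectorBasis i) = 1 := by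
  rw [dotc_eq_star_dotProduct, dotProduct_comm, ← EuclideanSpace.inner_eq_star_dotProduct,
    inner_self_eq_norm_sq_to_K, hH.eigenvectorBasis.orthonormal.1 i]
  norm_num

lemma mulVec_eigenvectorBasis_eq_ofReal_smul (hH : H.IsHermitian) (i : ι) :
    H *ᵥ hH.eigenvectorBasis i = (hH.eigenvalues i : ℂ) • hH.eigenvectorBasis i := by
  rw [hH.mulVec_eigenvectorBasis, Complex.coe_smul]

end Matrix.IsHermitian

def stabilityForm (H : Matrix ι ι ℂ) (ψ : ι → ℂ) (A : Matrix ι ι ℂ) : ℂ :=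
  dotc ψ ((Aᴴ * (H * A - A * H)) *ᵥ ψ)

lemma stabilityForm_eq (H A : Matrix ι ι ℂ) (ψ : ι → ℂ) :
    stabilityForm H ψ A = dotc (A *ᵥ ψ) (H *ᵥ A *ᵥ ψ) - dotc (A *ᵥ ψ) (A *ᵥ H *ᵥ ψ) := by
  rw [stabilityForm, dotc_conjTranspose_mul_mulVec, sub_mulVec, ← mulVec_mulVec,
    ← mulVec_mulVec, dotc_sub_right]

variable {H : Matrix ι ι ℂ} {ψ : ι → ℂ}

lemma stabilityForm_of_mulVec_eq_smul [DecidableEq ι] {c : ℂ} (hψ : H *ᵥ ψ = c • ψ)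
    (A : Matrix ι ι ℂ) : stabilityForm H ψ A = dotc (A *ᵥ ψ) ((H - c • 1) *ᵥ A *ᵥ ψ) := by
  rw [stabilityForm_eq, hψ, sub_mulVec, smul_mulVec, one_mulVec, mulVec_smul, dotc_sub_right]

lemma stabilityForm_vecMulVec [DecidableEq ι] {c : ℂ} {v : ι → ℂ} (hv : dotc v v = 1)
    (hHv : H *ᵥ v = c • v) (hψ : dotc ψ ψ = 1) :
    stabilityForm H ψ (vecMulVec v (star ψ)) = -dotc ψ ((H - c • 1) *ᵥ ψ) := by
  have hA : ∀ x, vecMulVec v (star ψ) *ᵥ x = dotc ψ x • v := fun x ↦ by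
    rw [vecMulVec_mulVec, op_smul_eq_smul]
    rfl
  rw [stabilityForm_eq, hA, hψ, one_smul, hHv, hA, dotc_smul_right, dotc_smul_right, hv,
    sub_mulVec, smul_mulVec, one_mulVec, dotc_sub_right, dotc_smul_right, hψ]
  ring

/-- Let `H` be a Hermitian `n×n` complex matrix with smallest
eigenvalue `λ_min`, and let `ψ ∈ ℂⁿ` be a unit vector. Then
`Re⟨ψ, A*[H,A]ψ⟩ ≥ 0` for every `n×n` complex matrix `A` if and only if
`Hψ = λ_min ψ`: the pure solutions of the local stability inequalities are
exactly the eigenvectors belonging to the smallest eigenvalue of `H`. -/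
theorem local_stability_iff_ground_eigenvector (n : ℕ) (hn : 0 < n)
    (H : Matrix (Fin n) (Fin n) ℂ) (hH : H.IsHermitian)
    (ψ : Fin n → ℂ) (hψ : dotc ψ ψ = 1) :
    (∀ A : Matrix (Fin n) (Fin n) ℂ,
        0 ≤ (dotc ψ ((Aᴴ * (H * A - A * H)).mulVec ψ)).re) ↔
      H.mulVec ψ = (((⨅ i, hH.eigenvalues i : ℝ)) : ℂ) • ψ := by
  have : Nonempty (Fin n) := ⟨⟨0, hn⟩⟩
  set c : ℝ := ⨅ i, hH.eigenvalues i
  have hM : (H - (c : ℂ) • 1).PosSemidef :=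
    hH.posSemidef_sub_smul_one_of_le_eigenvalues fun i ↦
      ciInf_le (Set.finite_range _).bddBelow i
  have hM_ker : H *ᵥ ψ = (c : ℂ) • ψ ↔ (H - (c : ℂ) • 1) *ᵥ ψ = 0 := by
    rw [sub_mulVec, smul_mulVec, one_mulVec, sub_eq_zero]
  change (∀ A, 0 ≤ (stabilityForm H ψ A).re) ↔ _
  constructor
  · intro hstable
    obtain ⟨i, hi⟩ := exists_eq_ciInf_of_finite (f := hH.eigenvalues)
    have hground := hH.mulVec_eigenvectorBasis_eq_ofReal_smul i
    rw [hi] at hground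
    have h := hstable (vecMulVec (hH.eigenvectorBasis i) (star ψ))
    rw [stabilityForm_vecMulVec (hH.dotc_eigenvectorBasis_self i) hground hψ, Complex.neg_re,
      neg_nonneg] at h
    exact hM_ker.mpr (hM.mulVec_eq_zero_of_re_dotc_nonpos h)
  · intro hground A
    rw [stabilityForm_of_mulVec_eq_smul hground]
    exact hM.re_dotc_mulVec_nonneg _
end
end

section
/- Let H be a Hermitian n×n complex matrix with smallest eigenvalue λ_min, and let ρ be a density matrix (positive semidefinite with trace 1). Then Re Tr(ρ A*[H,A]) ≥ 0 for every n×n complex matrix A if and only if the range of ρ is contained in the eigenspace of H for the eigenvalue λ_min. In particular, the set of density matrices satisfying the local stability inequalities is a face of the convex set of all density matrices. -/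
/-! Put `P = H - λ_min`, which is positive semidefinite. Since `[H, A] = [P, A]`, we have
`Tr(ρ A*[H,A]) = Tr(ρ A*PA) - Tr(Pρ A*A)`, so `Pρ = 0` makes every stability inequality hold.
Conversely, for a unit ground state `x` the test matrices `A = |x⟩⟨e_j|` give
`Tr(ρ A*[H,A]) = ((λ_min - H) ρ)_jj`; summing over `j` yields `Re Tr(Pρ) ≤ 0`. As a trace of a
product of positive semidefinite matrices, `Tr(Pρ) ≥ 0`, hence `Tr(Pρ) = 0`, which forces
`Pρ = 0`, i.e. `range ρ ⊆ ker P`. The face property follows because `ρ ↦ Tr(Pρ)` is linear and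
nonnegative on positive semidefinite matrices, so it vanishes on a proper convex combination
only if it vanishes on both ends. -/

open Matrix ComplexOrder

namespace Matrix

variable {ι 𝕜 : Type*} [Fintype ι] [RCLike 𝕜]

open scoped MatrixOrder in
lemma PosSemidef.trace_mul_nonneg {A B : Matrix ι ι 𝕜} (hA : A.PosSemidef)
    (hB : B.PosSemidef) : 0 ≤ (A * B).trace := by
  classical
  obtain ⟨C, rfl⟩ := CStarAlgebra.nonneg_iff_eq_star_mul_self.mp hB.nonneg
  rw [star_eq_conjTranspose, ← Matrix.mul_assoc, trace_mul_cycle]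
  exact (hA.mul_mul_conjTranspose_same C).trace_nonneg

open scoped MatrixOrder in
lemma PosSemidef.mul_eq_zero_of_trace_mul_eq_zero {A B : Matrix ι ι 𝕜} (hA : A.PosSemidef)
    (hB : B.PosSemidef) (h : (A * B).trace = 0) : A * B = 0 := by
  classical
  obtain ⟨C, rfl⟩ := CStarAlgebra.nonneg_iff_eq_star_mul_self.mp hB.nonneg
  obtain ⟨D, rfl⟩ := CStarAlgebra.nonneg_iff_eq_star_mul_self.mp hA.nonneg
  simp only [star_eq_conjTranspose] at h ⊢
  have hDC : D * Cᴴ = 0 := by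
    rw [← trace_conjTranspose_mul_self_eq_zero_iff, ← h, conjTranspose_mul,
      conjTranspose_conjTranspose, Matrix.mul_assoc, trace_mul_cycle', ← Matrix.mul_assoc,
      ← Matrix.mul_assoc, trace_mul_comm]
    simp only [Matrix.mul_assoc]
  rw [Matrix.mul_assoc, ← Matrix.mul_assoc D, hDC, Matrix.zero_mul, Matrix.mul_zero]

lemma PosSemidef.mul_eq_zero_of_mul_smul_add_smul_eq_zero {P A B : Matrix ι ι 𝕜}
    (hP : P.PosSemidef) (hA : A.PosSemidef) (hB : B.PosSemidef) {s t : 𝕜} (hs : 0 < s)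
    (ht : 0 < t) (h : P * (s • A + t • B) = 0) : P * A = 0 ∧ P * B = 0 := by
  have htr : s * (P * A).trace + t * (P * B).trace = 0 := by
    simpa [Matrix.mul_add, trace_add] using congrArg trace h
  obtain ⟨hsA, htB⟩ := (add_eq_zero_iff_of_nonneg (mul_nonneg hs.le (hP.trace_mul_nonneg hA))
    (mul_nonneg ht.le (hP.trace_mul_nonneg hB))).mp htr
  exact ⟨hP.mul_eq_zero_of_trace_mul_eq_zero hA ((mul_eq_zero.mp hsA).resolve_left hs.ne'),
    hP.mul_eq_zero_of_trace_mul_eq_zero hB ((mul_eq_zero.mp htB).resolve_left ht.ne')⟩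

variable [DecidableEq ι]

lemma conjTranspose_vecMulVec_mul_commutator {H : Matrix ι ι 𝕜} {x : ι → 𝕜} {μ : 𝕜}
    (hx : H *ᵥ x = μ • x) (hx1 : star x ⬝ᵥ x = 1) (v : ι → 𝕜) :
    (vecMulVec x v)ᴴ * (H * vecMulVec x v - vecMulVec x v * H)
      = vecMulVec (star v) v * (μ • 1 - H) := by
  rw [conjTranspose_vecMulVec, mul_vecMulVec, hx, Matrix.mul_sub, vecMulVec_mul_vecMulVec,
    ← Matrix.mul_assoc, vecMulVec_mul_vecMulVec, dotProduct_smul, hx1]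
  simp [Matrix.mul_sub]

lemma trace_mul_single_mul (ρ M : Matrix ι ι 𝕜) (j : ι) :
    (ρ * (single j j 1 * M)).trace = (M * ρ) j j := by
  rw [trace_mul_comm, Matrix.mul_assoc, trace_single_mul, one_smul]

lemma range_mulVecLin_le_eigenspace_iff {R : Type*} [CommRing R] {H ρ : Matrix ι ι R} {μ : R} :
    LinearMap.range ρ.mulVecLin ≤ Module.End.eigenspace H.mulVecLin μ ↔ (H - μ • 1) * ρ = 0 := by
  rw [Module.End.eigenspace_def, LinearMap.range_le_ker_iff, ← map_eq_zero_iff _ toLin'.injective,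
    toLin'_mul, map_sub, map_smul, toLin'_one, toLin'_apply', toLin'_apply']
  rfl

open scoped MatrixOrder in
lemma IsHermitian.posSemidef_sub_smul_one {H : Matrix ι ι 𝕜} (hH : H.IsHermitian) {l : ℝ}
    (hl : ∀ i, l ≤ hH.eigenvalues i) : (H - (l : 𝕜) • 1).PosSemidef := by
  rw [← nonneg_iff_posSemidef, sub_nonneg]
  have : algebraMap ℝ (Matrix ι ι 𝕜) l ≤ H := by
    rw [algebraMap_le_iff_le_spectrum (a := H) hH.isSelfAdjoint,
      hH.spectrum_real_eq_range_eigenvalues]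
    rintro _ ⟨i, rfl⟩
    exact hl i
  simpa [Algebra.algebraMap_eq_smul_one] using this

lemma IsHermitian.mulVec_eigenvectorBasis_eq_coe_smul {H : Matrix ι ι 𝕜} (hH : H.IsHermitian)
    (i : ι) :
    H *ᵥ ⇑(hH.eigenvectorBasis i) = (hH.eigenvalues i : 𝕜) • ⇑(hH.eigenvectorBasis i) := by
  rw [hH.mulVec_eigenvectorBasis, RCLike.real_smul_eq_coe_smul (K := 𝕜)]

lemma IsHermitian.star_eigenvectorBasis_dotProduct_self {H : Matrix ι ι 𝕜} (hH : H.IsHermitian)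
    (i : ι) : star ⇑(hH.eigenvectorBasis i) ⬝ᵥ ⇑(hH.eigenvectorBasis i) = 1 := by
  rw [dotProduct_comm, ← EuclideanSpace.inner_eq_star_dotProduct, inner_self_eq_norm_sq_to_K,
    hH.eigenvectorBasis.orthonormal.1 i]
  simp

end Matrix

section LocalStability

variable {ι : Type*} [Fintype ι] [DecidableEq ι]

def IsLocallyStable (H ρ : Matrix ι ι ℂ) : Prop :=
  ∀ A : Matrix ι ι ℂ, 0 ≤ ((ρ * (Aᴴ * (H * A - A * H))).trace).re

lemma IsLocallyStable.re_trace_sub_smul_one_mul_nonpos {H ρ : Matrix ι ι ℂ} {x : ι → ℂ} {μ : ℂ}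
    (hρ : IsLocallyStable H ρ) (hx : H *ᵥ x = μ • x) (hx1 : star x ⬝ᵥ x = 1) :
    ((H - μ • 1) * ρ).trace.re ≤ 0 := by
  have hdiag (j : ι) : 0 ≤ (((μ • 1 - H) * ρ) j j).re := by
    have := hρ (vecMulVec x (Pi.single j 1))
    rwa [conjTranspose_vecMulVec_mul_commutator hx hx1, ← Pi.single_star, star_one,
      ← single_eq_single_vecMulVec_single, trace_mul_single_mul] at this
  calc ((H - μ • 1) * ρ).trace.re = -∑ j, (((μ • 1 - H) * ρ) j j).re := by
        rw [← neg_sub, Matrix.neg_mul, trace_neg, Complex.neg_re, trace, Complex.re_sum]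
        rfl
    _ ≤ 0 := neg_nonpos.mpr (Finset.sum_nonneg fun j _ => hdiag j)

lemma isLocallyStable_of_sub_smul_one_mul_eq_zero {H ρ : Matrix ι ι ℂ} {μ : ℂ}
    (hP : (H - μ • 1).PosSemidef) (hρ : ρ.PosSemidef) (h : (H - μ • 1) * ρ = 0) :
    IsLocallyStable H ρ := by
  intro A
  set P := H - μ • 1
  have hcomm : H * A - A * H = P * A - A * P := by
    simp only [P, Matrix.sub_mul, Matrix.mul_sub, Matrix.smul_mul, Matrix.mul_smul,
      Matrix.one_mul, Matrix.mul_one]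
    abel
  have hAAP : (ρ * (Aᴴ * (A * P))).trace = 0 := by
    rw [← Matrix.mul_assoc Aᴴ, ← Matrix.mul_assoc, trace_mul_comm, ← Matrix.mul_assoc, h,
      Matrix.zero_mul, trace_zero]
  rw [hcomm, Matrix.mul_sub, Matrix.mul_sub, trace_sub, hAAP, sub_zero, ← Matrix.mul_assoc Aᴴ]
  exact (Complex.nonneg_iff.mp (hρ.trace_mul_nonneg (hP.conjTranspose_mul_mul_same A))).1

theorem isLocallyStable_iff_sub_smul_one_mul_eq_zero {H ρ : Matrix ι ι ℂ} (hH : H.IsHermitian)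
    {i : ι} (hi : ∀ j, hH.eigenvalues i ≤ hH.eigenvalues j) (hρ : ρ.PosSemidef) :
    IsLocallyStable H ρ ↔ (H - (hH.eigenvalues i : ℂ) • 1) * ρ = 0 := by
  have hP := hH.posSemidef_sub_smul_one hi
  refine ⟨fun hstab => hP.mul_eq_zero_of_trace_mul_eq_zero hρ ?_,
    isLocallyStable_of_sub_smul_one_mul_eq_zero hP hρ⟩
  have hre := hstab.re_trace_sub_smul_one_mul_nonpos (hH.mulVec_eigenvectorBasis_eq_coe_smul i)
    (hH.star_eigenvectorBasis_dotProduct_self i)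
  obtain ⟨hre', him⟩ := Complex.nonneg_iff.mp (hP.trace_mul_nonneg hρ)
  exact Complex.ext (le_antisymm hre hre') him.symm

end LocalStability

/-- Let `H` be a Hermitian `n×n` complex matrix with smallest eigenvalue
`λ_min`, and let `ρ` be a density matrix (positive semidefinite with trace 1). Then
`Re Tr(ρ A*[H,A]) ≥ 0` for every `n×n` complex matrix `A` if and only if the range
of `ρ` is contained in the eigenspace of `H` for the eigenvalue `λ_min`.
In particular, the set of density matrices satisfying the local stability
inequalities is a face of the convex set of all density matrices. -/
theorem density_local_stability_iff_ground_range (n : ℕ) (hn : 0 < n)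
    (H : Matrix (Fin n) (Fin n) ℂ) (hH : H.IsHermitian)
    (lmin : ℝ) (hlmin : lmin = ⨅ i, hH.eigenvalues i) :
    (∀ ρ : Matrix (Fin n) (Fin n) ℂ, ρ.PosSemidef → ρ.trace = 1 →
      ((∀ A : Matrix (Fin n) (Fin n) ℂ,
          0 ≤ ((ρ * (Aᴴ * (H * A - A * H))).trace).re) ↔
        LinearMap.range ρ.mulVecLin ≤
          Module.End.eigenspace H.mulVecLin ((lmin : ℂ)))) ∧
    (∀ ρ₁ ρ₂ : Matrix (Fin n) (Fin n) ℂ,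
      ρ₁.PosSemidef → ρ₁.trace = 1 → ρ₂.PosSemidef → ρ₂.trace = 1 →
      ∀ t : ℝ, 0 < t → t < 1 →
      (∀ A : Matrix (Fin n) (Fin n) ℂ,
          0 ≤ ((((t : ℂ) • ρ₁ + ((1 : ℂ) - (t : ℂ)) • ρ₂) *
                (Aᴴ * (H * A - A * H))).trace).re) →
        (∀ A : Matrix (Fin n) (Fin n) ℂ,
            0 ≤ ((ρ₁ * (Aᴴ * (H * A - A * H))).trace).re) ∧
        (∀ A : Matrix (Fin n) (Fin n) ℂ,
            0 ≤ ((ρ₂ * (Aᴴ * (H * A - A * H))).trace).re)) := by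
  have : Nonempty (Fin n) := ⟨⟨0, hn⟩⟩
  obtain ⟨i, hi⟩ := exists_eq_ciInf_of_finite (f := hH.eigenvalues)
  have hmin (j : Fin n) : hH.eigenvalues i ≤ hH.eigenvalues j :=
    hi ▸ ciInf_le (Set.finite_range _).bddBelow j
  rw [hlmin, ← hi]
  have key {ρ : Matrix (Fin n) (Fin n) ℂ} (hρ : ρ.PosSemidef) :=
    isLocallyStable_iff_sub_smul_one_mul_eq_zero hH hmin hρ
  refine ⟨fun ρ hρ _ => (key hρ).trans range_mulVecLin_le_eigenspace_iff.symm, ?_⟩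
  intro ρ₁ ρ₂ hρ₁ _ hρ₂ _ t ht0 ht1 hσ
  have ht : (0 : ℂ) < t := by exact_mod_cast ht0
  have h1t : (0 : ℂ) < 1 - t := by rw [sub_pos]; exact_mod_cast ht1
  obtain ⟨h₁, h₂⟩ := (hH.posSemidef_sub_smul_one hmin).mul_eq_zero_of_mul_smul_add_smul_eq_zero
    hρ₁ hρ₂ ht h1t ((key ((hρ₁.smul ht.le).add (hρ₂.smul h1t.le))).mp hσ)
  exact ⟨(key hρ₁).mpr h₁, (key hρ₂).mpr h₂⟩
end

section
/- For every q ∈ (0,1) and every L ≥ 1, the kernel of the finite XXZ kink chain Hamiltonian H_L equals the linear span of the family of kink product vectors {φ(z) : z ∈ ℂ}; equivalently, every zero-energy vector of H_L is a linear combination of the vectors φ(z), and this span coincides with the span of the sector vectors ψ_k, k = 0,…,L+1, and has dimension L+2. -/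
open Matrix Kronecker ComplexOrder

noncomputable section

/-- The operator acting as the two-site matrix `M` on the tensor factors of the sites
`a` and `b` (in this order) and as the identity on all other factors. -/
def twoSiteOp {ι : Type*} [Fintype ι] [DecidableEq ι]
    (M : Matrix (Fin 2 × Fin 2) (Fin 2 × Fin 2) ℂ) (a b : ι) :
    Matrix (ι → Fin 2) (ι → Fin 2) ℂ :=
  fun σ τ => M (σ a, σ b) (τ a, τ b) *
    (if ∀ y, y ≠ a → y ≠ b → σ y = τ y then 1 else 0)

/-- The operator acting as the one-site matrix `A` on the tensor factor of the site `a`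
and as the identity on all other factors. -/
def siteOp {ι : Type*} [Fintype ι] [DecidableEq ι]
    (A : Matrix (Fin 2) (Fin 2) ℂ) (a : ι) : Matrix (ι → Fin 2) (ι → Fin 2) ℂ :=
  fun σ τ => A (σ a) (τ a) * (if ∀ y, y ≠ a → σ y = τ y then 1 else 0)

/-- The finite XXZ kink chain Hamiltonian `H_L = Σ_{x=0}^{L−1} h(Δ)_{x,x+1}`
on `(ℂ²)^{⊗(L+1)}` (sites `0,…,L`). -/
def HChain (L : ℕ) (q : ℝ) : Matrix (Fin (L + 1) → Fin 2) (Fin (L + 1) → Fin 2) ℂ :=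
  ∑ x : Fin L, twoSiteOp (hKink q) x.castSucc x.succ

/-- The kink product vector `φ(z) = ⊗_{x=0}^{L}(|↑⟩ + z q^x |↓⟩)`. -/
def phi (L : ℕ) (q : ℝ) (z : ℂ) : (Fin (L + 1) → Fin 2) → ℂ :=
  fun σ => ∏ x : Fin (L + 1), (![1, z * (q : ℂ) ^ (x : ℕ)] : Fin 2 → ℂ) (σ x)

/-- The total third component of the spin, `S³_tot = Σ_{x=0}^{L} S³_x`. -/
def S3tot (L : ℕ) : Matrix (Fin (L + 1) → Fin 2) (Fin (L + 1) → Fin 2) ℂ :=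
  ∑ x : Fin (L + 1), siteOp S3 x

/-- The sector ground state vector `ψ_k = Σ_{D ⊆ {0,…,L}, |D| = k} q^{Σ_{x∈D} x} |D⟩`,
where `|D⟩` has `|↓⟩` at the sites of `D` and `|↑⟩` elsewhere. -/
def psiSector (L : ℕ) (q : ℝ) (k : ℕ) : (Fin (L + 1) → Fin 2) → ℂ :=
  fun σ =>
    if (Finset.univ.filter fun x => σ x = 1).card = k then
      (q : ℂ) ^ (∑ x ∈ Finset.univ.filter (fun x => σ x = 1), (x : ℕ))
    else 0

/-!
The bond term `h(Δ)` is the orthogonal projection onto `ξ = |↑↓⟩ − q|↓↑⟩`, so `H_L` is a sum of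
positive semidefinite terms and `H_L v = 0` iff every bond term annihilates `v`, i.e.
`v(…↑↓…) = q · v(…↓↑…)` at every bond `(x, x+1)`. Equivalently, `v σ / q^(Σ_{x ∈ D(σ)} x)` is
invariant under the transposition of two adjacent sites, hence under every permutation of the
sites, so it depends only on the number of down spins: `v` is a combination of the `ψ_k`. These
lie in the kernel and have disjoint supports. Finally `φ(z) = Σ_k z^k ψ_k`, and the Vandermonde
matrix of the nodes `z = 0, …, L+1` inverts this relation.
-/

open Finset Function Submodule

lemma Matrix.sum_mulVec_eq_zero_iff_of_posSemidef {𝕜 n κ : Type*} [RCLike 𝕜] [Fintype n]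
    {s : Finset κ} {A : κ → Matrix n n 𝕜} (hA : ∀ i ∈ s, (A i).PosSemidef) (v : n → 𝕜) :
    (∑ i ∈ s, A i) *ᵥ v = 0 ↔ ∀ i ∈ s, A i *ᵥ v = 0 := by
  refine ⟨fun h => ?_, fun h => by simp [sum_mulVec, sum_eq_zero h]⟩
  have hsum : ∑ i ∈ s, star v ⬝ᵥ A i *ᵥ v = 0 := by
    rw [← dotProduct_sum, ← sum_mulVec, h, dotProduct_zero]
  intro i hi
  rw [← (hA i hi).dotProduct_mulVec_zero_iff]
  exact (sum_eq_zero_iff_of_nonneg fun j hj => (hA j hj).dotProduct_mulVec_nonneg v).mp hsum i hi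

lemma Matrix.span_range_sum_smul_eq {K V n : Type*} [Field K] [AddCommGroup V] [Module K V]
    [Fintype n] [DecidableEq n] {A : Matrix n n K} (hA : A.det ≠ 0) (f : n → V) :
    span K (Set.range fun i => ∑ j, A i j • f j) = span K (Set.range f) := by
  refine le_antisymm (span_le.mpr ?_) (span_le.mpr ?_)
  · rintro _ ⟨i, rfl⟩
    exact sum_mem fun j _ => smul_mem _ _ (subset_span ⟨j, rfl⟩)
  · rintro _ ⟨j, rfl⟩
    have hf : f j = ∑ i, A⁻¹ j i • ∑ k, A i k • f k := by
      simp_rw [smul_sum, smul_smul]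
      rw [sum_comm]
      simp_rw [← sum_smul, ← mul_apply, nonsing_inv_mul _ (isUnit_iff_ne_zero.mpr hA),
        one_apply, ite_smul, one_smul, zero_smul, sum_ite_eq, mem_univ, if_true]
    rw [hf]
    exact sum_mem fun i _ => smul_mem _ _ (subset_span ⟨i, rfl⟩)

lemma exists_perm_eq_comp_of_card_fiber_eq {ι β : Type*} [Fintype ι] [DecidableEq β]
    {f g : ι → β} (h : ∀ c, Fintype.card {i // f i = c} = Fintype.card {i // g i = c}) :
    ∃ π : Equiv.Perm ι, g = f ∘ π :=
  ⟨Equiv.ofFiberEquiv fun c => Fintype.equivOfCardEq (h c).symm,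
    funext fun i => (Equiv.ofFiberEquiv_map _ i).symm⟩

section TwoSiteOp

variable {ι β : Type*} [DecidableEq ι] {a b : ι}

lemma update_update_apply_left (hab : a ≠ b) (σ : ι → β) (s t : β) :
    update (update σ a s) b t a = s := by
  rw [update_of_ne hab, update_self]

lemma update_update_update_update (σ : ι → β) (s t s' t' : β) :
    update (update (update (update σ a s) b t) a s') b t' = update (update σ a s') b t' := by
  ext y; simp only [update_apply]; split_ifs <;> simp_all

lemma update_update_eq_of_forall_ne_ne {σ τ : ι → β} (h : ∀ y, y ≠ a → y ≠ b → σ y = τ y) :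
    update (update σ a (τ a)) b (τ b) = τ := by
  ext y
  by_cases hyb : y = b; · simp [hyb]
  by_cases hya : y = a; · subst hya; simp [update_of_ne hyb]
  simp [update_of_ne hya, update_of_ne hyb, h y hya hyb]

lemma sum_ite_forall_ne_ne_eq_sum_update_update [Fintype ι] [Fintype β] [DecidableEq β]
    {R : Type*} [AddCommMonoid R] (hab : a ≠ b) (σ : ι → β) (f : (ι → β) → R) :
    ∑ τ : ι → β, (if ∀ y, y ≠ a → y ≠ b → σ y = τ y then f τ else 0)
      = ∑ p : β × β, f (update (update σ a p.1) b p.2) := by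
  rw [← sum_filter]
  refine sum_nbij' (fun τ => (τ a, τ b)) (fun p => update (update σ a p.1) b p.2)
    (by simp) ?_ ?_ (by simp [update_update_apply_left hab]) ?_
  · intro p _
    simp +contextual [update_of_ne]
  all_goals
    intro τ hτ
    simp only [mem_filter, mem_univ, true_and] at hτ
    simp only [update_update_eq_of_forall_ne_ne hτ]

open Matrix

variable [Fintype ι] (M N : Matrix (Fin 2 × Fin 2) (Fin 2 × Fin 2) ℂ)

lemma twoSiteOp_mulVec_apply (hab : a ≠ b) (v : (ι → Fin 2) → ℂ) (σ : ι → Fin 2) :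
    (twoSiteOp M a b *ᵥ v) σ = ∑ p, M (σ a, σ b) p * v (update (update σ a p.1) b p.2) := by
  simp only [mulVec, dotProduct, twoSiteOp, mul_ite, ite_mul, mul_one, mul_zero, zero_mul]
  rw [sum_ite_forall_ne_ne_eq_sum_update_update hab]
  simp [update_update_apply_left hab]

lemma twoSiteOp_mul (hab : a ≠ b) :
    twoSiteOp M a b * twoSiteOp N a b = twoSiteOp (M * N) a b := by
  refine ext_iff_mulVec.mpr fun v => funext fun σ => ?_
  simp only [← mulVec_mulVec, twoSiteOp_mulVec_apply _ hab, mul_sum, update_update_apply_left hab,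
    update_self, update_update_update_update, mul_apply, sum_mul, mul_assoc]
  exact sum_comm

lemma twoSiteOp_conjTranspose : (twoSiteOp M a b)ᴴ = twoSiteOp Mᴴ a b := by
  ext σ τ
  simp [twoSiteOp, eq_comm, apply_ite (starRingEnd ℂ)]

variable {M} in
lemma IsStarProjection.posSemidef_twoSiteOp (hM : IsStarProjection M) (hab : a ≠ b) :
    (twoSiteOp M a b).PosSemidef := by
  have hM' : M = Mᴴ * M := by rw [← star_eq_conjTranspose, hM.isSelfAdjoint.star_eq, hM.1.eq]
  rw [hM', ← twoSiteOp_mul _ _ hab, ← twoSiteOp_conjTranspose]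
  exact posSemidef_conjTranspose_mul_self _

end TwoSiteOp

section Kink

open Matrix

/-- The vector `ξ = |↑↓⟩ − q|↓↑⟩`, with `0 = ↑` and `1 = ↓`. -/
def xiVec (q : ℝ) : Fin 2 × Fin 2 → ℂ := fun p => !![0, 1; -(q : ℂ), 0] p.1 p.2

variable {q : ℝ}

lemma star_xiVec (q : ℝ) : star (xiVec q) = xiVec q := by
  ext ⟨i, j⟩; fin_cases i <;> fin_cases j <;> simp [xiVec]

lemma xiVec_dotProduct_self (q : ℝ) : xiVec q ⬝ᵥ xiVec q = 1 + (q : ℂ) ^ 2 := by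
  simp [dotProduct, Fintype.sum_prod_type, xiVec]; ring

lemma one_add_sq_ne_zero (q : ℝ) : 1 + (q : ℂ) ^ 2 ≠ 0 := by
  exact_mod_cast (by positivity : (1 + q ^ 2 : ℝ) ≠ 0)

lemma hKink_eq_smul_vecMulVec (hq : q ≠ 0) :
    hKink q = (1 + (q : ℂ) ^ 2)⁻¹ • vecMulVec (xiVec q) (xiVec q) := by
  have hq' : (q : ℂ) ≠ 0 := by exact_mod_cast hq
  have h1 := one_add_sq_ne_zero q
  have hΔ : ((Delta q : ℝ) : ℂ) = (1 + q ^ 2) / (2 * q) := by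
    simp only [Delta]; push_cast; field_simp; ring
  have hB : ((Bfield q : ℝ) : ℂ) = (1 - q ^ 2) / (2 * (1 + q ^ 2)) := by
    simp only [Bfield]; push_cast; rfl
  ext ⟨i, j⟩ ⟨k, l⟩
  fin_cases i <;> fin_cases j <;> fin_cases k <;> fin_cases l <;>
    simp [hKink, hΔ, hB, S1, S2, S3, xiVec, vecMulVec_apply, one_apply, div_mul_div_comm,
      Complex.I_mul_I] <;>
    field_simp <;> ring

lemma isStarProjection_hKink (hq : q ≠ 0) : IsStarProjection (hKink q) := by
  rw [isStarProjection_iff', hKink_eq_smul_vecMulVec hq]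
  constructor
  · rw [smul_mul_smul_comm, vecMulVec_mul_vecMulVec, xiVec_dotProduct_self, vecMulVec_smul,
      smul_smul]
    congr 1
    field_simp [one_add_sq_ne_zero q]
  · rw [star_smul, star_eq_conjTranspose, conjTranspose_vecMulVec, star_xiVec]
    congr 1
    simp [← Complex.ofReal_pow, ← Complex.ofReal_one, ← Complex.ofReal_add, ← Complex.ofReal_inv]

end Kink

section LocalCondition

open Matrix

variable {ι : Type*} [DecidableEq ι] {a b : ι} {q : ℝ}

/-- The contraction of `v` with `ξ` on the sites `a, b`. -/
def xiComponent (q : ℝ) (v : (ι → Fin 2) → ℂ) (a b : ι) (σ : ι → Fin 2) : ℂ :=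
  v (update (update σ a 0) b 1) - q * v (update (update σ a 1) b 0)

lemma xiComponent_update_update (v : (ι → Fin 2) → ℂ) (σ : ι → Fin 2) (s t : Fin 2) :
    xiComponent q v a b (update (update σ a s) b t) = xiComponent q v a b σ := by
  simp only [xiComponent, update_update_update_update]

variable [Fintype ι]

lemma twoSiteOp_hKink_mulVec_apply (hq : q ≠ 0) (hab : a ≠ b) (v : (ι → Fin 2) → ℂ)
    (σ : ι → Fin 2) :
    (twoSiteOp (hKink q) a b *ᵥ v) σ
      = (1 + (q : ℂ) ^ 2)⁻¹ * xiVec q (σ a, σ b) * xiComponent q v a b σ := by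
  rw [twoSiteOp_mulVec_apply _ hab, hKink_eq_smul_vecMulVec hq]
  simp [Fintype.sum_prod_type, xiComponent, xiVec, vecMulVec_apply]
  ring

lemma twoSiteOp_hKink_mulVec_eq_zero_iff (hq : q ≠ 0) (hab : a ≠ b) (v : (ι → Fin 2) → ℂ) :
    twoSiteOp (hKink q) a b *ᵥ v = 0 ↔ ∀ σ, xiComponent q v a b σ = 0 := by
  refine ⟨fun h σ => ?_, fun h => funext fun σ => by simp [twoSiteOp_hKink_mulVec_apply hq hab, h]⟩
  have := congrFun h (update (update σ a 0) b 1)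
  rw [twoSiteOp_hKink_mulVec_apply hq hab, xiComponent_update_update,
    update_update_apply_left hab, update_self] at this
  simpa [xiVec, one_add_sq_ne_zero q] using this

lemma HChain_mulVec_eq_zero_iff {L : ℕ} (hq : q ≠ 0) (v : (Fin (L + 1) → Fin 2) → ℂ) :
    HChain L q *ᵥ v = 0 ↔ ∀ (x : Fin L) σ, xiComponent q v x.castSucc x.succ σ = 0 := by
  rw [HChain, sum_mulVec_eq_zero_iff_of_posSemidef
    fun x _ => (isStarProjection_hKink hq).posSemidef_twoSiteOp x.castSucc_lt_succ.ne]
  simp only [mem_univ, true_imp_iff]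
  exact forall_congr' fun x => twoSiteOp_hKink_mulVec_eq_zero_iff hq Fin.castSucc_lt_succ.ne v

end LocalCondition

section DownSet

variable {ι : Type*} [Fintype ι]

def downSet (σ : ι → Fin 2) : Finset ι := univ.filter fun x => σ x = 1

lemma exists_perm_eq_comp_of_card_downSet_eq {σ τ : ι → Fin 2}
    (h : (downSet σ).card = (downSet τ).card) : ∃ π : Equiv.Perm ι, τ = σ ∘ π := by
  have hone (ρ : ι → Fin 2) : Fintype.card {i // ρ i = 1} = (downSet ρ).card :=
    Fintype.card_subtype _
  have hzero (ρ : ι → Fin 2) :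
      Fintype.card {i // ρ i = 0} = Fintype.card ι - (downSet ρ).card := by
    rw [← hone, ← Fintype.card_subtype_compl]
    exact Fintype.card_congr (Equiv.subtypeEquivRight fun i => by omega)
  refine exists_perm_eq_comp_of_card_fiber_eq fun c => ?_
  fin_cases c
  · simp only [Fin.zero_eta, hzero, h]
  · simp only [Fin.mk_one, hone, h]

variable [DecidableEq ι] {a b : ι}

lemma downSet_update_update (hab : a ≠ b) (σ : ι → Fin 2) :
    downSet (update (update σ a 0) b 1) = insert b (downSet σ \ {a, b}) := by
  ext y
  by_cases hyb : y = b; · simp [downSet, hyb]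
  by_cases hya : y = a; · simp [downSet, hya, hab]
  simp [downSet, hya, hyb]

lemma downSet_update_update' (hab : a ≠ b) (σ : ι → Fin 2) :
    downSet (update (update σ a 1) b 0) = insert a (downSet σ \ {a, b}) := by
  rw [update_comm hab, downSet_update_update hab.symm, pair_comm]

lemma card_downSet_update_update (hab : a ≠ b) (σ : ι → Fin 2) :
    (downSet (update (update σ a 0) b 1)).card = (downSet (update (update σ a 1) b 0)).card := by
  rw [downSet_update_update hab, downSet_update_update' hab, card_insert_of_notMem (by simp),
    card_insert_of_notMem (by simp)]

end DownSet

section Sectors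

variable {L : ℕ} {q : ℝ}

def downSum (σ : Fin (L + 1) → Fin 2) : ℕ := ∑ x ∈ downSet σ, (x : ℕ)

lemma psiSector_apply (k : ℕ) (σ : Fin (L + 1) → Fin 2) :
    psiSector L q k σ = if (downSet σ).card = k then (q : ℂ) ^ downSum σ else 0 := rfl

lemma downSum_update_update (x : Fin L) (σ : Fin (L + 1) → Fin 2) :
    downSum (update (update σ x.castSucc 0) x.succ 1)
      = downSum (update (update σ x.castSucc 1) x.succ 0) + 1 := by
  have hx : x.castSucc ≠ x.succ := Fin.castSucc_lt_succ.ne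
  rw [downSum, downSum, downSet_update_update hx, downSet_update_update' hx,
    sum_insert (by simp), sum_insert (by simp), Fin.val_succ, Fin.val_castSucc]
  ring

lemma xiComponent_psiSector (k : ℕ) (x : Fin L) (σ : Fin (L + 1) → Fin 2) :
    xiComponent q (psiSector L q k) x.castSucc x.succ σ = 0 := by
  rw [xiComponent, psiSector_apply, psiSector_apply, downSum_update_update,
    card_downSet_update_update Fin.castSucc_lt_succ.ne]
  split_ifs <;> ring

def rescaled (q : ℝ) (v : (Fin (L + 1) → Fin 2) → ℂ) (σ : Fin (L + 1) → Fin 2) : ℂ :=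
  v σ / (q : ℂ) ^ downSum σ

section KernelVector

variable (hq : q ≠ 0) {v : (Fin (L + 1) → Fin 2) → ℂ}
  (hv : ∀ (x : Fin L) σ, xiComponent q v x.castSucc x.succ σ = 0)
include hq hv

lemma rescaled_comp_swap (x : Fin L) (σ : Fin (L + 1) → Fin 2) :
    rescaled q v (σ ∘ Equiv.swap x.castSucc x.succ) = rescaled q v σ := by
  have hx : x.castSucc ≠ x.succ := Fin.castSucc_lt_succ.ne
  have hq' : (q : ℂ) ≠ 0 := by exact_mod_cast hq
  have hhop : rescaled q v (update (update σ x.castSucc 0) x.succ 1)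
      = rescaled q v (update (update σ x.castSucc 1) x.succ 0) := by
    simp only [rescaled, downSum_update_update, pow_succ, sub_eq_zero.mp (hv x σ)]
    field_simp
  have hswap (s t : Fin 2) : rescaled q v (update (update σ x.castSucc s) x.succ t)
      = rescaled q v (update (update σ x.castSucc t) x.succ s) := by
    fin_cases s <;> fin_cases t
    · rfl
    · exact hhop
    · exact hhop.symm
    · rfl
  have := hswap (σ x.castSucc) (σ x.succ)
  rw [update_eq_self, update_eq_self, update_comm hx, ← Equiv.comp_swap_eq_update] at this
  exact this.symm

lemma rescaled_comp_perm (π : Equiv.Perm (Fin (L + 1))) (σ : Fin (L + 1) → Fin 2) :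
    rescaled q v (σ ∘ π) = rescaled q v σ := by
  have hπ := (Equiv.Perm.mclosure_swap_castSucc_succ L).symm ▸ Submonoid.mem_top π
  induction hπ using Submonoid.closure_induction generalizing σ with
  | mem _ h => obtain ⟨x, rfl⟩ := h; exact rescaled_comp_swap hq hv x σ
  | one => rfl
  | mul π₁ π₂ _ _ h₁ h₂ => rw [Equiv.Perm.coe_mul, ← comp_assoc, h₂, h₁]

lemma rescaled_eq_of_card_downSet_eq {σ τ : Fin (L + 1) → Fin 2}
    (h : (downSet σ).card = (downSet τ).card) : rescaled q v τ = rescaled q v σ := by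
  obtain ⟨π, rfl⟩ := exists_perm_eq_comp_of_card_downSet_eq h
  exact rescaled_comp_perm hq hv π σ

end KernelVector

def lowConfig (L k : ℕ) : Fin (L + 1) → Fin 2 := fun x => if (x : ℕ) < k then 1 else 0

lemma card_downSet_lowConfig {k : ℕ} (hk : k ≤ L + 1) : (downSet (lowConfig L k)).card = k := by
  have : downSet (lowConfig L k) = univ.filter fun x : Fin (L + 1) => (x : ℕ) < k := by
    ext x; simp [downSet, lowConfig]
  rw [this, Fin.card_filter_val_lt, min_eq_right hk]

lemma card_downSet_lt (σ : Fin (L + 1) → Fin 2) : (downSet σ).card < L + 2 :=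
  Nat.lt_succ_of_le ((card_le_univ _).trans_eq (Fintype.card_fin _))

lemma sum_smul_psiSector_apply (c : Fin (L + 2) → ℂ) (σ : Fin (L + 1) → Fin 2) :
    (∑ k, c k • psiSector L q k) σ = c ⟨_, card_downSet_lt σ⟩ * (q : ℂ) ^ downSum σ := by
  rw [Finset.sum_apply, sum_eq_single ⟨_, card_downSet_lt σ⟩]
  · simp [psiSector_apply]
  · intro k _ hk
    rw [Pi.smul_apply, psiSector_apply, if_neg (fun h => hk (Fin.ext h.symm)), smul_zero]
  · simp

lemma mem_span_psiSector (hq : q ≠ 0) {v : (Fin (L + 1) → Fin 2) → ℂ}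
    (hv : ∀ (x : Fin L) σ, xiComponent q v x.castSucc x.succ σ = 0) :
    v ∈ span ℂ (Set.range fun k : Fin (L + 2) => psiSector L q k) := by
  have hq' : (q : ℂ) ≠ 0 := by exact_mod_cast hq
  have hsum : v = ∑ k : Fin (L + 2), rescaled q v (lowConfig L k) • psiSector L q k := by
    funext σ
    rw [sum_smul_psiSector_apply, rescaled_eq_of_card_downSet_eq hq hv
      (card_downSet_lowConfig (Nat.lt_succ_iff.mp (card_downSet_lt σ))).symm, rescaled]
    field_simp
  rw [hsum]
  exact sum_mem fun k _ => smul_mem _ _ (subset_span ⟨k, rfl⟩)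

lemma linearIndependent_psiSector (hq : q ≠ 0) :
    LinearIndependent ℂ fun k : Fin (L + 2) => psiSector L q k := by
  have hq' : (q : ℂ) ≠ 0 := by exact_mod_cast hq
  refine Fintype.linearIndependent_iff.mpr fun c hc k => ?_
  have := congrFun hc (lowConfig L k)
  rw [sum_smul_psiSector_apply, Pi.zero_apply] at this
  simpa [card_downSet_lowConfig (Nat.lt_succ_iff.mp k.2), hq'] using this

lemma phi_eq_sum_smul_psiSector (z : ℂ) :
    phi L q z = ∑ k : Fin (L + 2), z ^ (k : ℕ) • psiSector L q k := by
  funext σ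
  rw [sum_smul_psiSector_apply]
  have hfactor (x : Fin (L + 1)) :
      (![1, z * (q : ℂ) ^ (x : ℕ)] : Fin 2 → ℂ) (σ x) = if σ x = 1 then z * q ^ (x : ℕ) else 1 := by
    generalize σ x = s
    fin_cases s <;> simp
  simp only [phi, hfactor, ← prod_filter, prod_mul_distrib, prod_const, prod_pow_eq_pow_sum]
  rfl

lemma span_phi_eq_span_psiSector :
    span ℂ (Set.range (phi L q)) = span ℂ (Set.range fun k : Fin (L + 2) => psiSector L q k) := by
  refine le_antisymm (span_le.mpr ?_) ?_
  · rintro _ ⟨z, rfl⟩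
    rw [phi_eq_sum_smul_psiSector]
    exact sum_mem fun k _ => smul_mem _ _ (subset_span ⟨k, rfl⟩)
  · have hV : (Matrix.vandermonde fun i : Fin (L + 2) => ((i : ℕ) : ℂ)).det ≠ 0 :=
      Matrix.det_vandermonde_ne_zero_iff.mpr (Nat.cast_injective.comp Fin.val_injective)
    rw [← Matrix.span_range_sum_smul_eq hV]
    refine span_mono ?_
    rintro _ ⟨i, rfl⟩
    exact ⟨i, by simp [phi_eq_sum_smul_psiSector, Matrix.vandermonde_apply]⟩

lemma ker_HChain_eq_span_psiSector (hq : q ≠ 0) :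
    LinearMap.ker (HChain L q).mulVecLin
      = span ℂ (Set.range fun k : Fin (L + 2) => psiSector L q k) := by
  refine le_antisymm (fun v hv => ?_) (span_le.mpr ?_)
  · exact mem_span_psiSector hq ((HChain_mulVec_eq_zero_iff hq v).mp hv)
  · rintro _ ⟨k, rfl⟩
    exact (HChain_mulVec_eq_zero_iff hq _).mpr (xiComponent_psiSector k)

end Sectors

theorem HChain_kernel_eq_span_kinks_general (q : ℝ) (hq0 : 0 < q)
    (L : ℕ) :
    (∀ v : (Fin (L + 1) → Fin 2) → ℂ,
      (HChain L q).mulVec v = 0 ↔ v ∈ Submodule.span ℂ (Set.range (phi L q))) ∧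
    Submodule.span ℂ (Set.range (phi L q)) =
      Submodule.span ℂ (Set.range fun k : Fin (L + 2) => psiSector L q (k : ℕ)) ∧
    Module.finrank ℂ (LinearMap.ker (HChain L q).mulVecLin) = L + 2 := by
  have hker := ker_HChain_eq_span_psiSector (L := L) hq0.ne'
  refine ⟨fun v => ?_, span_phi_eq_span_psiSector, ?_⟩
  · rw [span_phi_eq_span_psiSector, ← hker, LinearMap.mem_ker, Matrix.mulVecLin_apply]
  · rw [hker, finrank_span_eq_card (linearIndependent_psiSector hq0.ne'), Fintype.card_fin]

/-- For every `q ∈ (0,1)` and every `L ≥ 1`, the kernel of the finite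
XXZ kink chain Hamiltonian `H_L` equals the linear span of the family of kink product
vectors `{φ(z) : z ∈ ℂ}`; this span coincides with the span of the sector vectors
`ψ_k`, `k = 0,…,L+1`, and has dimension `L+2`. -/
theorem HChain_kernel_eq_span_kinks (q : ℝ) (hq0 : 0 < q) (hq1 : q < 1)
    (L : ℕ) (hL : 1 ≤ L) :
    (∀ v : (Fin (L + 1) → Fin 2) → ℂ,
      (HChain L q).mulVec v = 0 ↔ v ∈ Submodule.span ℂ (Set.range (phi L q))) ∧
    Submodule.span ℂ (Set.range (phi L q)) =
      Submodule.span ℂ (Set.range fun k : Fin (L + 2) => psiSector L q (k : ℕ)) ∧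
    Module.finrank ℂ (LinearMap.ker (HChain L q).mulVecLin) = L + 2 :=
  HChain_kernel_eq_span_kinks_general q hq0 L
end
end
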